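/- Let H be a Pommaret basis of a quasi-stable ideal I, h ∈ H, and x_k a non-multiplicative variable of h. If h' is the unique involutive divisor in H of x_k·h, then cls(h') ≥ cls(h). -/

import Mathlib

/-- The class of an exponent vector: the least index with nonzero exponent. -/
noncomputable def cls {n : ℕ} (μ : Fin n → ℕ) : ℕ := sInf {i : ℕ | ∃ hi : i < n, μ ⟨i, hi⟩ ≠ 0}

/-- Pommaret involutive divisibility: `μ` divides `ν` and the quotient only
involves the multiplicative variables `x_1, …, x_{cls μ}` of `μ`. -/
def InvDvd {n : ℕ} (μ ν : Fin n → ℕ) : Prop :=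
  (∀ i, μ i ≤ ν i) ∧ ∀ i : Fin n, cls μ < (i : ℕ) → ν i = μ i

/-- Membership of a monomial in the monomial ideal generated by `H`. -/
def MemMonIdeal {n : ℕ} (H : Set (Fin n → ℕ)) (ν : Fin n → ℕ) : Prop :=
  ∃ h ∈ H, ∀ i, h i ≤ ν i

/-!
Multiplying `h` by a non-multiplicative variable `x_k` keeps the class: `cls h ≤ cls (x_k h)`.
A nonzero divisor of a monomial has class at least that of the monomial, so it remains to see
`h' ≠ 1`. Here `cls 1 = 0` (an infimum of the empty set), so every variable but the first is
non-multiplicative for `1`, and `x_k` with `k > cls h ≥ 0` would then be excluded from `x_k h`.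
-/

section Cls

variable {n : ℕ}

@[simp]
theorem cls_zero : cls (0 : Fin n → ℕ) = 0 := by
  simp [cls]

theorem cls_le_of_apply_ne_zero {μ : Fin n → ℕ} {i : Fin n} (hi : μ i ≠ 0) : cls μ ≤ i :=
  Nat.sInf_le ⟨i.isLt, hi⟩

theorem apply_eq_zero_of_lt_cls {μ : Fin n → ℕ} {i : Fin n} (hi : (i : ℕ) < cls μ) : μ i = 0 := by
  by_contra hne
  exact (cls_le_of_apply_ne_zero hne).not_gt hi

theorem exists_apply_cls_ne_zero {μ : Fin n → ℕ} (hμ : μ ≠ 0) :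
    ∃ hc : cls μ < n, μ ⟨cls μ, hc⟩ ≠ 0 := by
  obtain ⟨i, hi⟩ := Function.ne_iff.mp hμ
  exact Nat.sInf_mem (⟨i, i.isLt, hi⟩ : {j : ℕ | ∃ hj : j < n, μ ⟨j, hj⟩ ≠ 0}.Nonempty)

theorem le_cls_of_forall_lt_eq_zero {μ : Fin n → ℕ} (hμ : μ ≠ 0) {m : ℕ}
    (hzero : ∀ i : Fin n, (i : ℕ) < m → μ i = 0) : m ≤ cls μ := by
  obtain ⟨hc, hne⟩ := exists_apply_cls_ne_zero hμ
  by_contra! hlt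
  exact hne (hzero _ hlt)

theorem cls_le_cls_of_le {μ ν : Fin n → ℕ} (hμ : μ ≠ 0) (hle : μ ≤ ν) : cls ν ≤ cls μ := by
  obtain ⟨hc, hne⟩ := exists_apply_cls_ne_zero hμ
  exact cls_le_of_apply_ne_zero fun h0 => hne (Nat.eq_zero_of_le_zero (h0 ▸ hle _))

theorem cls_le_cls_mul_var {μ : Fin n → ℕ} {k : Fin n} (hk : cls μ < (k : ℕ)) :
    cls μ ≤ cls (fun i => if i = k then μ i + 1 else μ i) := by
  refine le_cls_of_forall_lt_eq_zero (Function.ne_iff.mpr ⟨k, by simp⟩) fun i hi => ?_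
  have hik : i ≠ k := Fin.ne_of_lt (hi.trans hk)
  simp only [if_neg hik]
  exact apply_eq_zero_of_lt_cls hi

end Cls

theorem InvDvd.ne_zero {n : ℕ} {μ ν : Fin n → ℕ} (hdiv : InvDvd μ ν) {k : Fin n}
    (hk : 0 < (k : ℕ)) (hν : ν k ≠ 0) : μ ≠ 0 := by
  rintro rfl
  exact hν (hdiv.2 k (by simpa using hk))

theorem cls_le_cls_of_invDvd_mul_general {n : ℕ}
    (h : Fin n → ℕ) (k : Fin n) (hk : cls h < (k : ℕ))
    (h' : Fin n → ℕ)
    (hdiv : InvDvd h' (fun i => if i = k then h i + 1 else h i)) :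
    cls h ≤ cls h' := by
  have hh' : h' ≠ 0 := hdiv.ne_zero (Nat.zero_lt_of_lt hk) (by simp)
  calc cls h ≤ cls (fun i => if i = k then h i + 1 else h i) := cls_le_cls_mul_var hk
    _ ≤ cls h' := cls_le_cls_of_le hh' hdiv.1

/-- If h' ∈ H is the involutive divisor of x_k · h, where h ∈ H and x_k is a
non-multiplicative variable of h, then cls h' ≥ cls h. -/
theorem cls_le_cls_of_invDvd_mul {n : ℕ} (H : Finset (Fin n → ℕ))
    (hPB : ∀ ν, MemMonIdeal ↑H ν → ∃! g, g ∈ H ∧ InvDvd g ν)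
    (h : Fin n → ℕ) (hh : h ∈ H) (k : Fin n) (hk : cls h < (k : ℕ))
    (h' : Fin n → ℕ) (hh' : h' ∈ H)
    (hdiv : InvDvd h' (fun i => if i = k then h i + 1 else h i)) :
    cls h ≤ cls h' :=
  cls_le_cls_of_invDvd_mul_general h k hk h' hdiv
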